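/- Let θ ∈ [0,1], let x ∈ R^n with residual r = b − Ax satisfying Aᵀr ≠ 0, and let J be the greedy index set determined by θ and r. Then ‖Ã_Jᵀ A(x − x⋆)‖₂² ≥ |J| · ‖Aᵀr‖₂²/‖A‖_F² ≥ |J| · (σ_min(A)²/‖A‖_F²) · ‖x − x⋆‖²_{AᵀA}. -/

import Mathlib

noncomputable section
open Matrix

/-- Squared Euclidean norm `‖v‖₂²` of a vector. -/
def norm2 {ι : Type*} [Fintype ι] (v : ι → ℝ) : ℝ := ∑ i, (v i) ^ 2

/-- Squared Frobenius norm `‖A‖_F²` of a matrix. -/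
def frob2 {ι κ : Type*} [Fintype ι] [Fintype κ] (A : Matrix ι κ ℝ) : ℝ :=
  ∑ i, ∑ j, (A i j) ^ 2

/-- Squared largest singular value `σ_max(B)²`, i.e. the largest eigenvalue of `Bᵀ * B`. -/
def sigmaMaxSq {ι κ : Type*} [Fintype ι] [Fintype κ] [DecidableEq κ]
    (B : Matrix ι κ ℝ) : ℝ :=
  sSup (Set.range (Matrix.isHermitian_conjTranspose_mul_self B).eigenvalues)

/-- Squared smallest singular value `σ_min(B)²`, i.e. the smallest eigenvalue of `Bᵀ * B`. -/
def sigmaMinSq {ι κ : Type*} [Fintype ι] [Fintype κ] [DecidableEq κ]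
    (B : Matrix ι κ ℝ) : ℝ :=
  sInf (Set.range (Matrix.isHermitian_conjTranspose_mul_self B).eigenvalues)

/-- Squared Euclidean norm `‖A_(j)‖₂²` of the `j`-th column of `A`. -/
def col2 {m n : ℕ} (A : Matrix (Fin m) (Fin n) ℝ) (j : Fin n) : ℝ := ∑ i, (A i j) ^ 2

/-- `A` has full column rank: its columns are linearly independent. -/
def FullColRank {m n : ℕ} (A : Matrix (Fin m) (Fin n) ℝ) : Prop :=
  LinearIndependent ℝ fun j : Fin n => (fun i => A i j : Fin m → ℝ)

/-- `max_{1 ≤ j ≤ n} |A_(j)ᵀ r|² / ‖A_(j)‖₂²`. -/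
def maxRatio {m n : ℕ} (A : Matrix (Fin m) (Fin n) ℝ) (r : Fin m → ℝ) : ℝ :=
  ⨆ j : Fin n, ((Aᵀ *ᵥ r) j) ^ 2 / col2 A j

/-- The greedy parameter
`ε = (θ/‖Aᵀr‖₂²)·max_j |A_(j)ᵀ r|²/‖A_(j)‖₂² + (1−θ)/‖A‖_F²`. -/
def eps {m n : ℕ} (A : Matrix (Fin m) (Fin n) ℝ) (r : Fin m → ℝ) (θ : ℝ) : ℝ :=
  θ / norm2 (Aᵀ *ᵥ r) * maxRatio A r + (1 - θ) / frob2 A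

open Classical in
/-- The greedy index set `J = { j : |A_(j)ᵀ r|² ≥ ε ‖Aᵀr‖₂² ‖A_(j)‖₂² }`. -/
def greedySet {m n : ℕ} (A : Matrix (Fin m) (Fin n) ℝ) (r : Fin m → ℝ) (θ : ℝ) :
    Finset (Fin n) :=
  Finset.univ.filter fun j =>
    eps A r θ * norm2 (Aᵀ *ᵥ r) * col2 A j ≤ ((Aᵀ *ᵥ r) j) ^ 2

/-- The column submatrix `A_J` of `A`, with columns indexed by `J`. -/
def subCols {m n : ℕ} (A : Matrix (Fin m) (Fin n) ℝ) (J : Finset (Fin n)) :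
    Matrix (Fin m) {j // j ∈ J} ℝ :=
  A.submatrix id fun j => (j : Fin n)

/-- The submatrix `I_J` of the `n × n` identity with columns indexed by `J`. -/
def subId {n : ℕ} (J : Finset (Fin n)) : Matrix (Fin n) {j // j ∈ J} ℝ :=
  (1 : Matrix (Fin n) (Fin n) ℝ).submatrix id fun j => (j : Fin n)

/-- Moore–Penrose pseudoinverse of a full-column-rank matrix: `B† = (BᵀB)⁻¹Bᵀ`. -/
def pinv {ι κ : Type*} [Fintype ι] [Fintype κ] [DecidableEq κ] (B : Matrix ι κ ℝ) :
    Matrix κ ι ℝ :=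
  (Bᵀ * B)⁻¹ * Bᵀ

/-- The matrix `Ã_J` whose columns are the normalized columns `A_(j)/‖A_(j)‖₂`, `j ∈ J`. -/
def tildeA {m n : ℕ} (A : Matrix (Fin m) (Fin n) ℝ) (J : Finset (Fin n)) :
    Matrix (Fin m) {j // j ∈ J} ℝ :=
  Matrix.of fun i j => A i (j : Fin n) / Real.sqrt (col2 A (j : Fin n))

/-- The matrix `Ĩ_J` whose columns are `e_j/‖A_(j)‖₂`, `j ∈ J`. -/
def tildeI {m n : ℕ} (A : Matrix (Fin m) (Fin n) ℝ) (J : Finset (Fin n)) :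
    Matrix (Fin n) {j // j ∈ J} ℝ :=
  Matrix.of fun i j => (if i = (j : Fin n) then 1 else 0) / Real.sqrt (col2 A (j : Fin n))

/-!
The normal equation turns `AᵀA(x − x⋆)` into `−Aᵀr`, so the entries of `Ã_Jᵀ A(x − x⋆)` are
`−A_(j)ᵀr / ‖A_(j)‖₂`. Bounding each ratio `|A_(j)ᵀr|²/‖A_(j)‖₂²` by its maximum and summing over
the columns gives `‖Aᵀr‖₂² ≤ max_j |A_(j)ᵀr|²/‖A_(j)‖₂² · ‖A‖_F²`, hence `ε ≥ 1/‖A‖_F²` once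
`θ ≥ 0`; so every `j ∈ J` contributes at least `‖Aᵀr‖₂²/‖A‖_F²`. The second inequality is
`σ_min(A)² ‖Az‖₂² ≤ ‖AᵀAz‖₂²`: with `M = AᵀA`, the matrix `M² − σ_min(A)² M` is positive
semidefinite, since its eigenvalues are `λ(λ − σ_min(A)²) ≥ 0`.
-/

lemma norm2_nonneg {ι : Type*} [Fintype ι] (v : ι → ℝ) : 0 ≤ norm2 v :=
  Finset.sum_nonneg fun _ _ => sq_nonneg _

lemma norm2_pos {ι : Type*} [Fintype ι] {v : ι → ℝ} (hv : v ≠ 0) : 0 < norm2 v := by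
  obtain ⟨i, hi⟩ := Function.ne_iff.mp hv
  exact (sq_pos_of_ne_zero hi).trans_le
    (Finset.single_le_sum (fun j _ => sq_nonneg (v j)) (Finset.mem_univ i))

lemma norm2_neg {ι : Type*} [Fintype ι] (v : ι → ℝ) : norm2 (-v) = norm2 v := by
  simp only [norm2, Pi.neg_apply, neg_sq]

lemma norm2_eq_dotProduct {ι : Type*} [Fintype ι] (v : ι → ℝ) : norm2 v = v ⬝ᵥ v := by
  simp only [norm2, dotProduct, sq]

lemma FullColRank.col2_pos {m n : ℕ} {A : Matrix (Fin m) (Fin n) ℝ} (hA : FullColRank A)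
    (j : Fin n) : 0 < col2 A j :=
  norm2_pos (hA.ne_zero j)

lemma frob2_nonneg {ι κ : Type*} [Fintype ι] [Fintype κ] (A : Matrix ι κ ℝ) : 0 ≤ frob2 A :=
  Finset.sum_nonneg fun _ _ => Finset.sum_nonneg fun _ _ => sq_nonneg _

lemma frob2_eq_sum_col2 {m n : ℕ} (A : Matrix (Fin m) (Fin n) ℝ) :
    frob2 A = ∑ j, col2 A j :=
  Finset.sum_comm

lemma norm2_tildeA_transpose_mulVec {m n : ℕ} (A : Matrix (Fin m) (Fin n) ℝ)
    (J : Finset (Fin n)) (v : Fin m → ℝ) :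
    norm2 ((tildeA A J)ᵀ *ᵥ v) = ∑ j ∈ J, (Aᵀ *ᵥ v) j ^ 2 / col2 A j := by
  rw [norm2, ← Finset.sum_coe_sort J]
  refine Finset.sum_congr rfl fun j _ => ?_
  have hc : 0 ≤ col2 A j := norm2_nonneg _
  simp only [mulVec, dotProduct, transpose_apply, tildeA, of_apply, div_mul_eq_mul_div,
    ← Finset.sum_div, div_pow, Real.sq_sqrt hc]

lemma norm2_transpose_mulVec_le_maxRatio_mul_frob2 {m n : ℕ} {A : Matrix (Fin m) (Fin n) ℝ}
    (hcol : ∀ j, 0 < col2 A j) (r : Fin m → ℝ) :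
    norm2 (Aᵀ *ᵥ r) ≤ maxRatio A r * frob2 A := by
  rw [norm2, frob2_eq_sum_col2, Finset.mul_sum]
  refine Finset.sum_le_sum fun j _ => ?_
  have hj : (Aᵀ *ᵥ r) j ^ 2 / col2 A j ≤ maxRatio A r :=
    le_ciSup (f := fun j => (Aᵀ *ᵥ r) j ^ 2 / col2 A j) (Set.finite_range _).bddAbove j
  rwa [div_le_iff₀ (hcol j)] at hj

lemma inv_frob2_le_eps {m n : ℕ} {A : Matrix (Fin m) (Fin n) ℝ} (hcol : ∀ j, 0 < col2 A j)
    {r : Fin m → ℝ} (hr : Aᵀ *ᵥ r ≠ 0) {θ : ℝ} (hθ : 0 ≤ θ) :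
    1 / frob2 A ≤ eps A r θ := by
  have hg := norm2_pos hr
  have hmax := norm2_transpose_mulVec_le_maxRatio_mul_frob2 hcol r
  have hF : 0 < frob2 A := by
    refine (frob2_nonneg A).lt_of_ne fun h => ?_
    rw [← h, mul_zero] at hmax
    linarith
  have hθmax : θ / frob2 A ≤ θ / norm2 (Aᵀ *ᵥ r) * maxRatio A r := by
    rw [div_mul_eq_mul_div, div_le_div_iff₀ hF hg]
    nlinarith
  calc 1 / frob2 A = θ / frob2 A + (1 - θ) / frob2 A := by ring
    _ ≤ eps A r θ := by rw [eps]; gcongr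

lemma card_greedySet_mul_le_sum {m n : ℕ} {A : Matrix (Fin m) (Fin n) ℝ}
    (hcol : ∀ j, 0 < col2 A j) {r : Fin m → ℝ} (hr : Aᵀ *ᵥ r ≠ 0) {θ : ℝ} (hθ : 0 ≤ θ) :
    ((greedySet A r θ).card : ℝ) * (norm2 (Aᵀ *ᵥ r) / frob2 A) ≤
      ∑ j ∈ greedySet A r θ, (Aᵀ *ᵥ r) j ^ 2 / col2 A j := by
  rw [← nsmul_eq_mul]
  refine Finset.card_nsmul_le_sum _ _ _ fun j hj => ?_
  have hjε : eps A r θ * norm2 (Aᵀ *ᵥ r) * col2 A j ≤ (Aᵀ *ᵥ r) j ^ 2 :=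
    (Finset.mem_filter.mp hj).2
  have hε := inv_frob2_le_eps hcol hr hθ
  have hg := norm2_nonneg (Aᵀ *ᵥ r)
  have hc := hcol j
  rw [le_div_iff₀ hc]
  calc norm2 (Aᵀ *ᵥ r) / frob2 A * col2 A j
      = 1 / frob2 A * norm2 (Aᵀ *ᵥ r) * col2 A j := by ring
    _ ≤ eps A r θ * norm2 (Aᵀ *ᵥ r) * col2 A j := by gcongr
    _ ≤ (Aᵀ *ᵥ r) j ^ 2 := hjε

open scoped MatrixOrder in
lemma sigmaMinSq_mul_norm2_le {ι κ : Type*} [Fintype ι] [Fintype κ] [DecidableEq κ]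
    (B : Matrix ι κ ℝ) (z : κ → ℝ) :
    sigmaMinSq B * norm2 (B *ᵥ z) ≤ norm2 ((Bᵀ * B) *ᵥ z) := by
  rw [← conjTranspose_eq_transpose_of_trivial]
  set M := Bᴴ * B
  have hM : M.IsHermitian := isHermitian_conjTranspose_mul_self B
  set σ := sigmaMinSq B
  have hpsd : 0 ≤ M * M - σ • M := by
    have hcfc : cfc (fun t : ℝ => t * t - σ * t) M = M * M - σ • M := by
      rw [cfc_sub _ _ M, cfc_mul _ _ M, cfc_id' ℝ M, cfc_const_mul σ _ M, cfc_id' ℝ M]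
    rw [← hcfc]
    refine cfc_nonneg fun t ht => ?_
    obtain ⟨i, rfl⟩ := hM.spectrum_real_eq_range_eigenvalues ▸ ht
    have h0 : 0 ≤ hM.eigenvalues i := eigenvalues_conjTranspose_mul_self_nonneg B i
    have hσ : σ ≤ hM.eigenvalues i := csInf_le (Set.finite_range _).bddBelow ⟨i, rfl⟩
    nlinarith
  have hquad := hpsd.posSemidef.dotProduct_mulVec_nonneg z
  have hMM : z ⬝ᵥ (M * M) *ᵥ z = (M *ᵥ z) ⬝ᵥ (M *ᵥ z) := by
    rw [← mulVec_mulVec, dotProduct_mulVec, ← mulVec_transpose,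
      ← conjTranspose_eq_transpose_of_trivial, hM.eq]
  have hMz : z ⬝ᵥ M *ᵥ z = (B *ᵥ z) ⬝ᵥ (B *ᵥ z) := by
    rw [← mulVec_mulVec, dotProduct_mulVec, ← mulVec_transpose,
      conjTranspose_eq_transpose_of_trivial, transpose_transpose]
  simp only [star_trivial, sub_mulVec, smul_mulVec, dotProduct_sub, dotProduct_smul, hMM, hMz,
    smul_eq_mul] at hquad
  rw [norm2_eq_dotProduct, norm2_eq_dotProduct]
  linarith

lemma transpose_mul_self_mulVec_sub_eq_neg {m n : ℕ} (A : Matrix (Fin m) (Fin n) ℝ)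
    {b : Fin m → ℝ} {xstar : Fin n → ℝ} (hstar : (Aᵀ * A) *ᵥ xstar = Aᵀ *ᵥ b)
    (x : Fin n → ℝ) : (Aᵀ * A) *ᵥ (x - xstar) = -(Aᵀ *ᵥ (b - A *ᵥ x)) := by
  rw [mulVec_sub, mulVec_sub, hstar, mulVec_mulVec]
  abel

/-- for the greedy index set `J`,
`‖Ã_Jᵀ A(x − x⋆)‖₂² ≥ |J| ‖Aᵀr‖₂²/‖A‖_F² ≥ |J| (σ_min(A)²/‖A‖_F²) ‖x − x⋆‖²_{AᵀA}`. -/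
theorem stmt15 {m n : ℕ} (A : Matrix (Fin m) (Fin n) ℝ) (hA : FullColRank A)
    (b : Fin m → ℝ) (xstar : Fin n → ℝ) (hstar : (Aᵀ * A) *ᵥ xstar = Aᵀ *ᵥ b)
    (θ : ℝ) (hθ : θ ∈ Set.Icc (0 : ℝ) 1) (x : Fin n → ℝ)
    (r : Fin m → ℝ) (hr : r = b - A *ᵥ x) (hr0 : Aᵀ *ᵥ r ≠ 0)
    (J : Finset (Fin n)) (hJ : J = greedySet A r θ) :
    norm2 ((tildeA A J)ᵀ *ᵥ (A *ᵥ (x - xstar))) ≥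
        (J.card : ℝ) * (norm2 (Aᵀ *ᵥ r) / frob2 A) ∧
      (J.card : ℝ) * (norm2 (Aᵀ *ᵥ r) / frob2 A) ≥
        (J.card : ℝ) * (sigmaMinSq A / frob2 A) * norm2 (A *ᵥ (x - xstar)) := by
  have hgrad : (Aᵀ * A) *ᵥ (x - xstar) = -(Aᵀ *ᵥ r) :=
    hr ▸ transpose_mul_self_mulVec_sub_eq_neg A hstar x
  have hcol := hA.col2_pos
  constructor
  · rw [norm2_tildeA_transpose_mulVec, mulVec_mulVec, hgrad, hJ]
    simpa only [Pi.neg_apply, neg_sq] using card_greedySet_mul_le_sum hcol hr0 hθ.1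
  · have hσ := sigmaMinSq_mul_norm2_le A (x - xstar)
    rw [hgrad, norm2_neg] at hσ
    have hF := frob2_nonneg A
    calc (J.card : ℝ) * (sigmaMinSq A / frob2 A) * norm2 (A *ᵥ (x - xstar))
        = J.card / frob2 A * (sigmaMinSq A * norm2 (A *ᵥ (x - xstar))) := by ring
      _ ≤ J.card / frob2 A * norm2 (Aᵀ *ᵥ r) := by gcongr
      _ = J.card * (norm2 (Aᵀ *ᵥ r) / frob2 A) := by ring
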